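/- arXiv:2202.03121 — 4 statements merged into one kernel-verified Lean document; each statement's English description precedes it below -/
import Mathlib

section
/- Let h(t) = (1/6) k_{abc} t^a t^b t^c be a homogeneous cubic polynomial on ℝ^n with symmetric coefficients, and let U ⊆ ℝ^n be an open set on which h > 0 and the Hessian matrix G_{ab}(t) = (1/(2h(t))) k_{abc} t^c is invertible. Then the (n+1)×(n+1) symmetric matrix N with entries N_{00} = -4h(t) + 2 k_{abc} b^a b^b t^c, N_{0a} = N_{a0} = -2 k_{abc} b^b t^c, N_{ab} = 2 k_{abc} t^c (for any b ∈ ℝ^n) is invertible with inverse N^{ij} given by: N^{00} = -1/(4h(t)), N^{0a} = N^{a0} = -b^a/(4h(t)), N^{ab} = -(b^a b^b - (G^{-1})^{ab})/(4h(t)). -/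
open Finset Matrix

/-- The explicit inverse of the matrix `N_{ij}` arising from the
q-map prepotential.  Indices: `none` plays the role of `0`, `some a` of `a = 1,…,n`. -/
theorem stmt_0 {n : ℕ} (k : Fin n → Fin n → Fin n → ℝ)
    (hsymm : ∀ a b c, k a b c = k b a c ∧ k a b c = k a c b)
    (t bv : Fin n → ℝ)
    (h : ℝ) (hh : h = (1/6) * ∑ a, ∑ b, ∑ c, k a b c * t a * t b * t c)
    (hpos : 0 < h)
    (G Ginv : Matrix (Fin n) (Fin n) ℝ)
    (hG : ∀ a b, G a b = (1/(2*h)) * ∑ c, k a b c * t c)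
    (hGinv₁ : G * Ginv = 1) (hGinv₂ : Ginv * G = 1)
    (N Ninv : Matrix (Option (Fin n)) (Option (Fin n)) ℝ)
    (hN : ∀ i j, N i j =
      match i, j with
      | none, none => -4*h + 2 * ∑ a, ∑ b, ∑ c, k a b c * bv a * bv b * t c
      | none, some a => -2 * ∑ b, ∑ c, k a b c * bv b * t c
      | some a, none => -2 * ∑ b, ∑ c, k a b c * bv b * t c
      | some a, some b => 2 * ∑ c, k a b c * t c)
    (hNinv : ∀ i j, Ninv i j =
      match i, j with
      | none, none => -1/(4*h)
      | none, some a => -(bv a)/(4*h)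
      | some a, none => -(bv a)/(4*h)
      | some a, some b => -(bv a * bv b - Ginv a b)/(4*h)) :
    N * Ninv = 1 ∧ Ninv * N = 1 := by
  have h0 : h ≠ 0 := ne_of_gt hpos
  have hS : ∀ a b, (∑ c, k a b c * t c) = 2*h*G a b := by
    intro a b; rw [hG a b]; field_simp
  have hGsym : ∀ a b, G a b = G b a := by
    intro a b; rw [hG a b, hG b a]; congr 1
    exact Finset.sum_congr rfl fun c _ => by rw [(hsymm a b c).1]
  have hGI : ∀ a c, (∑ b, G a b * Ginv b c) = if a = c then 1 else 0 := by
    intro a c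
    have := congrArg (fun M => M a c) hGinv₁
    simpa [Matrix.mul_apply, Matrix.one_apply] using this
  have e2 : ∀ a, (∑ b, ∑ c, k a b c * bv b * t c) = 2*h*(∑ b, G a b * bv b) := by
    intro a
    rw [Finset.mul_sum]
    refine Finset.sum_congr rfl fun b _ => ?_
    have : (∑ c, k a b c * bv b * t c) = bv b * ∑ c, k a b c * t c := by
      rw [Finset.mul_sum]; exact Finset.sum_congr rfl fun c _ => by ring
    rw [this, hS a b]; ring
  have e3 : (∑ a, ∑ b, ∑ c, k a b c * bv a * bv b * t c)
      = 2*h*(∑ a, ∑ b, G a b * bv a * bv b) := by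
    rw [Finset.mul_sum]
    refine Finset.sum_congr rfl fun a _ => ?_
    rw [Finset.mul_sum]
    refine Finset.sum_congr rfl fun b _ => ?_
    have : (∑ c, k a b c * bv a * bv b * t c) = (bv a * bv b) * ∑ c, k a b c * t c := by
      rw [Finset.mul_sum]; exact Finset.sum_congr rfl fun c _ => by ring
    rw [this, hS a b]; ring
  have main : N * Ninv = 1 := by
    ext i j
    rw [Matrix.mul_apply, Fintype.sum_option]
    match i, j with
    | none, none =>
      simp only [hN, hNinv, Matrix.one_apply_eq]
      rw [e3]
      simp only [e2]
      have step : ∀ a ∈ Finset.univ, (-2*(2*h*(∑ b, G a b * bv b)))*(-(bv a)/(4*h))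
          = ∑ b, G a b * bv a * bv b := by
        intro a _
        rw [show (-2*(2*h*(∑ b, G a b * bv b)))*(-(bv a)/(4*h))
            = (∑ b, G a b * bv b) * bv a from by field_simp; ring, Finset.sum_mul]
        exact Finset.sum_congr rfl fun b _ => by ring
      rw [Finset.sum_congr rfl step]
      field_simp
      ring
    | none, some c =>
      simp only [hN, hNinv]
      rw [Matrix.one_apply_ne (by simp)]
      rw [e3]
      simp only [e2]
      have step : ∀ a ∈ Finset.univ,
          (-2*(2*h*(∑ b, G a b * bv b)))*(-(bv a * bv c - Ginv a c)/(4*h))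
          = (∑ b, G a b * bv a * bv b) * bv c - ∑ b, G a b * bv b * Ginv a c := by
        intro a _
        rw [show (-2*(2*h*(∑ b, G a b * bv b)))*(-(bv a * bv c - Ginv a c)/(4*h))
            = (∑ b, G a b * bv b) * (bv a * bv c) - (∑ b, G a b * bv b) * Ginv a c from by
              field_simp; ring,
          Finset.sum_mul, Finset.sum_mul, Finset.sum_mul]
        congr 1
        exact Finset.sum_congr rfl fun b _ => by ring
      rw [Finset.sum_congr rfl step, Finset.sum_sub_distrib]
      have swap : (∑ a, ∑ b, G a b * bv b * Ginv a c) = bv c := by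
        rw [Finset.sum_comm]
        have inner : ∀ b ∈ Finset.univ, (∑ a, G a b * bv b * Ginv a c)
            = if b = c then bv b else 0 := by
          intro b _
          have : (∑ a, G a b * bv b * Ginv a c) = bv b * ∑ a, G b a * Ginv a c := by
            rw [Finset.mul_sum]
            exact Finset.sum_congr rfl fun a _ => by rw [hGsym a b]; ring
          rw [this, hGI b c]
          split <;> ring
        rw [Finset.sum_congr rfl inner]
        simp
      rw [swap, ← Finset.sum_mul]
      field_simp
      ring
    | some a, none =>
      simp only [hN, hNinv]
      rw [Matrix.one_apply_ne (by simp)]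
      rw [e2]
      have step : ∀ b ∈ Finset.univ, (2*(∑ c, k a b c * t c))*(-(bv b)/(4*h))
          = -(G a b * bv b) := by
        intro b _
        rw [hS a b]; field_simp; ring
      rw [Finset.sum_congr rfl step]
      rw [Finset.sum_neg_distrib]
      field_simp
      ring
    | some a, some c =>
      simp only [hN, hNinv]
      rw [e2]
      have step : ∀ b ∈ Finset.univ, (2*(∑ d, k a b d * t d))*(-(bv b * bv c - Ginv b c)/(4*h))
          = -(G a b * bv b * bv c) + G a b * Ginv b c := by
        intro b _
        rw [hS a b]; field_simp; ring
      rw [Finset.sum_congr rfl step, Finset.sum_add_distrib, Finset.sum_neg_distrib, hGI a c]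
      have : (∑ b, G a b * bv b * bv c) = (∑ b, G a b * bv b) * bv c := by
        rw [Finset.sum_mul]
      rw [this]
      by_cases hac : a = c
      · rw [if_pos hac, hac, Matrix.one_apply_eq]
        field_simp
        ring
      · rw [if_neg hac, Matrix.one_apply_ne (by simp [hac])]
        field_simp
        ring
  exact ⟨main, mul_eq_one_comm.mp main⟩
end

section
/- The map 𝓜 from type IIB coordinates (b^a, t^a, τ_1, τ_2, c^a, c_a, c_0, ψ) ∈ ℝ^n × U × ℝ × ℝ_{>0} × ℝ^n × ℝ^n × ℝ × ℝ to type IIA coordinates (z^a, ρ, ζ^0, ζ^a, 𝜁̃_0, 𝜁̃_a, σ) defined by ρ = (τ_2²/2) h(t), z^a = b^a + i t^a, ζ^0 = τ_1, ζ^a = -(c^a - τ_1 b^a), 𝜁̃_a = c_a + (k_{abc}/2) b^b (c^c - τ_1 b^c), 𝜁̃_0 = c_0 - (k_{abc}/6) b^a b^b (c^c - τ_1 b^c), σ = -2(ψ + (1/2)τ_1 c_0) + c_a(c^a - τ_1 b^a) - (k_{abc}/6) b^a c^b (c^c - τ_1 b^c), is a bijection onto ℝ^n × U × ℝ × ℝ_{>0}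 × ℝ^{2n+2} × ℝ, with inverse given explicitly by τ_2 = √(2ρ/h(t)), b^a + i t^a = z^a, τ_1 = ζ^0, c^a = -(ζ^a - ζ^0 b^a), c_a = 𝜁̃_a + (k_{abc}/2) b^b ζ^c, c_0 = 𝜁̃_0 - (k_{abc}/6) b^a b^b ζ^c, ψ = -σ/2 - (ζ^0/2)(𝜁̃_0 - (k_{abc}/6) b^a b^b ζ^c) - (ζ^a/2)(𝜁̃_a + (k_{abc}/2) b^b ζ^c) - (k_{abc}/12) b^a ζ^b (ζ^c - ζ^0 b^c). -/
open Finset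

noncomputable section

/-- the cubic polynomial `h(t) = (1/6) k_{abc} t^a t^b t^c`. -/
def cubic {n : ℕ} (k : Fin n → Fin n → Fin n → ℝ) (t : Fin n → ℝ) : ℝ :=
  (1/6) * ∑ a, ∑ b, ∑ c, k a b c * t a * t b * t c

/-- type IIB point: `(b, t, τ₁, τ₂, c^a, c_a, c₀, ψ)`. -/
abbrev IIB (n : ℕ) :=
  (Fin n → ℝ) × (Fin n → ℝ) × ℝ × ℝ × (Fin n → ℝ) × (Fin n → ℝ) × ℝ × ℝ

/-- type IIA point: `(b, t, ρ, ζ⁰, ζ^a, ζ̃₀, ζ̃_a, σ)`. -/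
abbrev IIA (n : ℕ) :=
  (Fin n → ℝ) × (Fin n → ℝ) × ℝ × ℝ × (Fin n → ℝ) × ℝ × (Fin n → ℝ) × ℝ

/-- the classical mirror map, from type IIB to type IIA variables. -/
def mirrorMap {n : ℕ} (k : Fin n → Fin n → Fin n → ℝ) : IIB n → IIA n :=
  fun (b, t, τ₁, τ₂, c, cl, c₀, ψ) =>
    (b, t,
     τ₂^2/2 * cubic k t,
     τ₁,
     fun a => -(c a - τ₁ * b a),
     c₀ - (1/6) * ∑ a, ∑ b', ∑ c', k a b' c' * b a * b b' * (c c' - τ₁ * b c'),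
     fun a => cl a + (1/2) * ∑ b', ∑ c', k a b' c' * b b' * (c c' - τ₁ * b c'),
     -2*(ψ + (1/2)*τ₁*c₀) + (∑ a, cl a * (c a - τ₁ * b a))
       - (1/6) * ∑ a, ∑ b', ∑ c', k a b' c' * b a * c b' * (c c' - τ₁ * b c'))

/-- the explicit inverse of the classical mirror map. -/
def mirrorInv {n : ℕ} (k : Fin n → Fin n → Fin n → ℝ) : IIA n → IIB n :=
  fun (b, t, ρ, ζ₀, ζ, ζt₀, ζt, σ) =>
    (b, t,
     ζ₀,
     Real.sqrt (2 * ρ / cubic k t),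
     fun a => -(ζ a - ζ₀ * b a),
     fun a => ζt a + (1/2) * ∑ b', ∑ c', k a b' c' * b b' * ζ c',
     ζt₀ - (1/6) * ∑ a, ∑ b', ∑ c', k a b' c' * b a * b b' * ζ c',
     -σ/2 - ζ₀/2 * (ζt₀ - (1/6) * ∑ a, ∑ b', ∑ c', k a b' c' * b a * b b' * ζ c')
       - (∑ a, ζ a / 2 * (ζt a + (1/2) * ∑ b', ∑ c', k a b' c' * b b' * ζ c'))
       - (1/12) * ∑ a, ∑ b', ∑ c', k a b' c' * b a * ζ b' * (ζ c' - ζ₀ * b c'))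


lemma dneg {n : ℕ} (k : Fin n → Fin n → Fin n → ℝ) (u w : Fin n → ℝ) (a : Fin n) :
    ∑ p, ∑ q, k a p q * u p * -(w q) = -∑ p, ∑ q, k a p q * u p * w q := by
  simp [mul_neg, Finset.sum_neg_distrib]

lemma tneg {n : ℕ} (k : Fin n → Fin n → Fin n → ℝ) (u v w : Fin n → ℝ) :
    ∑ a, ∑ p, ∑ q, k a p q * u a * v p * -(w q) = -∑ a, ∑ p, ∑ q, k a p q * u a * v p * w q := by
  simp [mul_neg, Finset.sum_neg_distrib]

lemma tswap {n : ℕ} (k : Fin n → Fin n → Fin n → ℝ) (hs : ∀ a p q, k a p q = k a q p)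
    (u x y : Fin n → ℝ) :
    ∑ a, ∑ p, ∑ q, k a p q * u a * x p * y q = ∑ a, ∑ p, ∑ q, k a p q * u a * y p * x q := by
  refine Finset.sum_congr rfl fun a _ => ?_
  rw [Finset.sum_comm]
  exact Finset.sum_congr rfl fun p _ => Finset.sum_congr rfl fun q _ => by rw [hs]; ring

lemma mirror_left {n : ℕ} (k : Fin n → Fin n → Fin n → ℝ)
    (hsymm : ∀ a b c, k a b c = k b a c ∧ k a b c = k a c b) :
    Set.LeftInvOn (mirrorInv k) (mirrorMap k)
      {x : IIB n | 0 < x.2.2.2.1 ∧ 0 < cubic k x.2.1} := by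
  rintro ⟨b, t, τ₁, τ₂, c, cl, c₀, ψ⟩ ⟨hτ₂, ht⟩
  simp only [Set.mem_setOf_eq] at hτ₂ ht
  simp only [mirrorMap, mirrorInv, Prod.mk.injEq]
  refine ⟨trivial, trivial, trivial, ?_, ?_, ?_, ?_, ?_⟩
  · rw [show 2 * (τ₂ ^ 2 / 2 * cubic k t) / cubic k t = τ₂ ^ 2 by field_simp]
    exact Real.sqrt_sq hτ₂.le
  · funext a; ring
  · funext a
    rw [dneg k b (fun q => c q - τ₁ * b q)]
    ring
  · rw [tneg k b b (fun q => c q - τ₁ * b q)]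
    ring
  · rw [tneg k b b (fun q => c q - τ₁ * b q)]
    simp only [dneg k b (fun q => c q - τ₁ * b q)]
    have h6 : ∑ x : Fin n,
        -(c x - τ₁ * b x) / 2 *
          (cl x + 1 / 2 * ∑ b' : Fin n, ∑ c' : Fin n, k x b' c' * b b' * (c c' - τ₁ * b c') +
            1 / 2 * -∑ p : Fin n, ∑ q : Fin n, k x p q * b p * (c q - τ₁ * b q)) =
        -(∑ x : Fin n, cl x * (c x - τ₁ * b x)) / 2 := by
      calc _ = ∑ x : Fin n, -(cl x * (c x - τ₁ * b x)) / 2 :=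
              Finset.sum_congr rfl fun x _ => by ring
        _ = _ := by rw [← Finset.sum_div, Finset.sum_neg_distrib]
    rw [h6]
    have h4 : ∑ a : Fin n, ∑ p : Fin n, ∑ q : Fin n,
        k a p q * b a * -(c p - τ₁ * b p) * (-(c q - τ₁ * b q) - τ₁ * b q) =
        ∑ a : Fin n, ∑ p : Fin n, ∑ q : Fin n,
        k a p q * b a * (c p - τ₁ * b p) * c q :=
      Finset.sum_congr rfl fun a _ => Finset.sum_congr rfl fun p _ =>
        Finset.sum_congr rfl fun q _ => by ring
    rw [h4, ← tswap k (fun a p q => (hsymm a p q).2) b c (fun q => c q - τ₁ * b q)]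
    ring

lemma mirror_right {n : ℕ} (k : Fin n → Fin n → Fin n → ℝ)
    (hsymm : ∀ a b c, k a b c = k b a c ∧ k a b c = k a c b) :
    Set.RightInvOn (mirrorInv k) (mirrorMap k)
      {y : IIA n | 0 < y.2.2.1 ∧ 0 < cubic k y.2.1} := by
  rintro ⟨b, t, ρ, ζ₀, ζ, ζt₀, ζt, σ⟩ ⟨hρ, ht⟩
  simp only [Set.mem_setOf_eq] at hρ ht
  simp only [mirrorMap, mirrorInv, Prod.mk.injEq]
  refine ⟨trivial, trivial, ?_, trivial, ?_, ?_, ?_, ?_⟩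
  · rw [Real.sq_sqrt (by positivity : (0:ℝ) ≤ 2 * ρ / cubic k t)]
    field_simp
  · funext a; ring
  · rw [show (∑ x : Fin n, ∑ x_1 : Fin n, ∑ x_2 : Fin n,
        k x x_1 x_2 * b x * b x_1 * (-(ζ x_2 - ζ₀ * b x_2) - ζ₀ * b x_2)) =
        -∑ a : Fin n, ∑ b' : Fin n, ∑ c' : Fin n, k a b' c' * b a * b b' * ζ c' by
      rw [← Finset.sum_neg_distrib]
      exact Finset.sum_congr rfl fun a _ => by
        rw [← Finset.sum_neg_distrib]
        exact Finset.sum_congr rfl fun p _ => by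
          rw [← Finset.sum_neg_distrib]
          exact Finset.sum_congr rfl fun q _ => by ring]
    ring
  · funext a
    rw [show (∑ x : Fin n, ∑ x_1 : Fin n,
        k a x x_1 * b x * (-(ζ x_1 - ζ₀ * b x_1) - ζ₀ * b x_1)) =
        -∑ b' : Fin n, ∑ c' : Fin n, k a b' c' * b b' * ζ c' by
      rw [← Finset.sum_neg_distrib]
      exact Finset.sum_congr rfl fun p _ => by
        rw [← Finset.sum_neg_distrib]
        exact Finset.sum_congr rfl fun q _ => by ring]
    ring
  · rw [show (∑ x : Fin n,
        (ζt x + 1 / 2 * ∑ b' : Fin n, ∑ c' : Fin n, k x b' c' * b b' * ζ c') *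
          (-(ζ x - ζ₀ * b x) - ζ₀ * b x)) =
        -2 * ∑ a : Fin n, ζ a / 2 *
          (ζt a + 1 / 2 * ∑ b' : Fin n, ∑ c' : Fin n, k a b' c' * b b' * ζ c') by
      rw [Finset.mul_sum]
      exact Finset.sum_congr rfl fun x _ => by ring]
    rw [show (∑ x : Fin n, ∑ x_1 : Fin n, ∑ x_2 : Fin n,
        k x x_1 x_2 * b x * -(ζ x_1 - ζ₀ * b x_1) * (-(ζ x_2 - ζ₀ * b x_2) - ζ₀ * b x_2)) =
        ∑ a : Fin n, ∑ p : Fin n, ∑ q : Fin n,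
          k a p q * b a * (ζ p - ζ₀ * b p) * ζ q from
      Finset.sum_congr rfl fun a _ => Finset.sum_congr rfl fun p _ =>
        Finset.sum_congr rfl fun q _ => by ring]
    rw [show (∑ a : Fin n, ∑ b' : Fin n, ∑ c' : Fin n,
        k a b' c' * b a * ζ b' * (ζ c' - ζ₀ * b c')) =
        ∑ a : Fin n, ∑ p : Fin n, ∑ q : Fin n,
          k a p q * b a * (ζ p - ζ₀ * b p) * ζ q from
      tswap k (fun a p q => (hsymm a p q).2) b ζ (fun q => ζ q - ζ₀ * b q)]
    ring

lemma mirror_mapsTo {n : ℕ} (k : Fin n → Fin n → Fin n → ℝ) :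
    Set.MapsTo (mirrorMap k)
      {x : IIB n | 0 < x.2.2.2.1 ∧ 0 < cubic k x.2.1}
      {y : IIA n | 0 < y.2.2.1 ∧ 0 < cubic k y.2.1} := by
  rintro ⟨b, t, τ₁, τ₂, c, cl, c₀, ψ⟩ ⟨hτ₂, ht⟩
  simp only [Set.mem_setOf_eq] at hτ₂ ht
  simp only [mirrorMap, Set.mem_setOf_eq]
  exact ⟨mul_pos (div_pos (pow_pos hτ₂ 2) two_pos) ht, ht⟩

lemma mirrorInv_mapsTo {n : ℕ} (k : Fin n → Fin n → Fin n → ℝ) :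
    Set.MapsTo (mirrorInv k)
      {y : IIA n | 0 < y.2.2.1 ∧ 0 < cubic k y.2.1}
      {x : IIB n | 0 < x.2.2.2.1 ∧ 0 < cubic k x.2.1} := by
  rintro ⟨b, t, ρ, ζ₀, ζ, ζt₀, ζt, σ⟩ ⟨hρ, ht⟩
  simp only [Set.mem_setOf_eq] at hρ ht
  simp only [mirrorInv, Set.mem_setOf_eq]
  exact ⟨Real.sqrt_pos.mpr (div_pos (by linarith) ht), ht⟩

/-- the classical mirror map is a bijection from
`{τ₂ > 0, h(t) > 0}` onto `{ρ > 0, h(t) > 0}`, with the displayed inverse. -/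
theorem stmt_1 {n : ℕ} (k : Fin n → Fin n → Fin n → ℝ)
    (hsymm : ∀ a b c, k a b c = k b a c ∧ k a b c = k a c b) :
    Set.BijOn (mirrorMap k)
      {x : IIB n | 0 < x.2.2.2.1 ∧ 0 < cubic k x.2.1}
      {y : IIA n | 0 < y.2.2.1 ∧ 0 < cubic k y.2.1} ∧
    Set.InvOn (mirrorInv k) (mirrorMap k)
      {x : IIB n | 0 < x.2.2.2.1 ∧ 0 < cubic k x.2.1}
      {y : IIA n | 0 < y.2.2.1 ∧ 0 < cubic k y.2.1} := by
  have hinv : Set.InvOn (mirrorInv k) (mirrorMap k)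
      {x : IIB n | 0 < x.2.2.2.1 ∧ 0 < cubic k x.2.1}
      {y : IIA n | 0 < y.2.2.1 ∧ 0 < cubic k y.2.1} :=
    ⟨mirror_left k hsymm, mirror_right k hsymm⟩
  exact ⟨hinv.bijOn (mirror_mapsTo k) (mirrorInv_mapsTo k), hinv⟩

end
end

section
/- For A = (a b; c d) ∈ SL(2,ℝ) and τ = τ_1 + iτ_2 in the upper half-plane, define an action on t ∈ ℂP¹ by A·t = (c τ_2 + (c τ_1 + d + |cτ+d|) t) / (c τ_1 + d + |cτ+d| - c τ_2 t), where SL(2,ℝ) simultaneously acts on τ by Möbius transformations. Under the Cayley transform z = (t+i)/(t-i), this action becomes A·z = ((c τ̄ + d)/|cτ+d|) · z, and consequently the formula defines an action of SL(2,ℝ) on the product of the upper half-plane with ℂP¹: (A·B)·(τ,t) = A·(B·(τ,t)). -/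
open UpperHalfPlane Complex

noncomputable section

/-- the unit complex number `e(A,τ) = (c τ̄ + d)/|cτ+d|`. -/
def eFactor (A : Matrix.SpecialLinearGroup (Fin 2) ℝ) (τ : UpperHalfPlane) : ℂ :=
  ((A.1 1 0 : ℂ) * (starRingEnd ℂ) (τ : ℂ) + (A.1 1 1 : ℂ)) /
    (‖(A.1 1 0 : ℂ) * (τ : ℂ) + (A.1 1 1 : ℂ)‖ : ℂ)

/-- the lifted S-duality action on the twistor fiber coordinate `t`:
`A·t = (c τ₂ + (c τ₁ + d + |cτ+d|) t)/(c τ₁ + d + |cτ+d| - c τ₂ t)`. -/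
def tAct (A : Matrix.SpecialLinearGroup (Fin 2) ℝ) (τ : UpperHalfPlane) (t : ℂ) : ℂ :=
  ((A.1 1 0 * τ.im : ℝ) + ((A.1 1 0 * τ.re + A.1 1 1 +
      ‖(A.1 1 0 : ℂ) * (τ : ℂ) + (A.1 1 1 : ℂ)‖ : ℝ) : ℂ) * t) /
  (((A.1 1 0 * τ.re + A.1 1 1 +
      ‖(A.1 1 0 : ℂ) * (τ : ℂ) + (A.1 1 1 : ℂ)‖ : ℝ) : ℂ)
    - (A.1 1 0 * τ.im : ℝ) * t)

/-!
Write `j = cτ + d` for the automorphy factor, so that `e(A,τ) = j̄/|j|` and the cocycle identity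
for `e` is the conjugate of the classical one `j(AB,τ) = j(A,Bτ) j(B,τ)`. In the coordinate `t`
the lifted action is the Möbius map of the matrix `(p q; -q p)` with `p = Re j + |j|`, `q = Im j`,
a rotation of the Riemann sphere; the Cayley transform diagonalises it, turning it into
multiplication by `(p - iq)/(p + iq) = (|j| + j̄)/(|j| + j) = j̄/|j|`.
-/

open MatrixGroups ComplexConjugate

lemma denom_mapGL (A : SL(2, ℝ)) (z : ℂ) :
    denom (Matrix.SpecialLinearGroup.mapGL ℝ A) z = A 1 0 * z + A 1 1 := rfl

lemma denom_mapGL_mul (A B : SL(2, ℝ)) (τ : ℍ) :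
    denom (Matrix.SpecialLinearGroup.mapGL ℝ (A * B)) τ =
      denom (Matrix.SpecialLinearGroup.mapGL ℝ A) (B • τ : ℍ) *
        denom (Matrix.SpecialLinearGroup.mapGL ℝ B) τ := by
  rw [map_mul, denom_cocycle _ _ τ.im_ne_zero, coe_specialLinearGroup_apply]
  rfl

lemma eFactor_eq_conj_div_norm (A : SL(2, ℝ)) (τ : ℍ) :
    eFactor A τ = conj (denom (Matrix.SpecialLinearGroup.mapGL ℝ A) τ) /
      ‖denom (Matrix.SpecialLinearGroup.mapGL ℝ A) τ‖ := by
  simp [eFactor, denom_mapGL]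

lemma norm_eFactor (A : SL(2, ℝ)) (τ : ℍ) : ‖eFactor A τ‖ = 1 := by
  rw [eFactor_eq_conj_div_norm, norm_div, norm_conj, norm_real, norm_norm,
    div_self (norm_ne_zero_iff.mpr (denom_ne_zero _ _))]

lemma eFactor_mul (A B : SL(2, ℝ)) (τ : ℍ) :
    eFactor (A * B) τ = eFactor A (B • τ) * eFactor B τ := by
  rw [eFactor_eq_conj_div_norm, eFactor_eq_conj_div_norm, eFactor_eq_conj_div_norm,
    denom_mapGL_mul, map_mul, norm_mul, ofReal_mul, mul_div_mul_comm]

def cayley (t : ℂ) : ℂ := (t + Complex.I) / (t - Complex.I)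

lemma cayley_moebius (p q t : ℂ) (h : p - q * t ≠ 0) :
    cayley ((q + p * t) / (p - q * t)) = (p - Complex.I * q) / (p + Complex.I * q) * cayley t := by
  rw [cayley, cayley, div_add' _ _ _ h, div_sub' h, div_div_div_cancel_right₀ h,
    ← mul_div_mul_comm]
  congr 1 <;> linear_combination q * I_sq

lemma norm_add_conj_div_norm_add (w : ℂ) (h : (‖w‖ : ℂ) + w ≠ 0) :
    (‖w‖ + conj w) / (‖w‖ + w) = conj w / ‖w‖ := by
  have hw : (‖w‖ : ℂ) ≠ 0 := by
    rintro hw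
    simp_all
  rw [div_eq_div_iff h hw]
  linear_combination -(mul_conj' w)

lemma cayley_moebius_norm_add (w t : ℂ) (h : ((w.re + ‖w‖ : ℝ) : ℂ) - w.im * t ≠ 0) :
    cayley ((w.im + ((w.re + ‖w‖ : ℝ) : ℂ) * t) / (((w.re + ‖w‖ : ℝ) : ℂ) - w.im * t)) =
      conj w / ‖w‖ * cayley t := by
  have h_minus : ((w.re + ‖w‖ : ℝ) : ℂ) - Complex.I * w.im = ‖w‖ + conj w := by
    apply Complex.ext <;> simp [add_comm]
  have h_plus : ((w.re + ‖w‖ : ℝ) : ℂ) + Complex.I * w.im = ‖w‖ + w := by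
    apply Complex.ext <;> simp [add_comm]
  have h_ne : (‖w‖ : ℂ) + w ≠ 0 := by
    rw [← h_plus]
    intro h0
    have hp : w.re + ‖w‖ = 0 := by simpa using congrArg Complex.re h0
    have hq : w.im = 0 := by simpa using congrArg Complex.im h0
    exact h (by simp [hp, hq])
  rw [cayley_moebius _ _ _ h, h_minus, h_plus, norm_add_conj_div_norm_add w h_ne]

lemma cayley_tAct (A : SL(2, ℝ)) (τ : ℍ) (t : ℂ)
    (h : (((A.1 1 0 * τ.re + A.1 1 1 + ‖(A.1 1 0 : ℂ) * (τ : ℂ) + (A.1 1 1 : ℂ)‖ : ℝ) : ℂ)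
        - (A.1 1 0 * τ.im : ℝ) * t) ≠ 0) :
    cayley (tAct A τ t) = eFactor A τ * cayley t := by
  have hre : (denom (Matrix.SpecialLinearGroup.mapGL ℝ A) τ).re = A.1 1 0 * τ.re + A.1 1 1 := by
    simp [denom_mapGL]
  have him : (denom (Matrix.SpecialLinearGroup.mapGL ℝ A) τ).im = A.1 1 0 * τ.im := by
    simp [denom_mapGL]
  rw [← denom_mapGL, ← hre, ← him] at h
  rw [tAct, eFactor_eq_conj_div_norm, ← denom_mapGL, ← hre, ← him]
  exact cayley_moebius_norm_add _ t h

/-- under the Cayley transform `z = (t+i)/(t-i)` the lift of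
S-duality to the twistor fiber becomes multiplication by the unit complex number
`e(A,τ) = (cτ̄+d)/|cτ+d|`; `e` satisfies the cocycle identity, and consequently
the formula defines an action of `SL(2,ℝ)` on the product of the upper
half-plane with the (Cayley-transformed) twistor sphere. -/
theorem stmt_3 :
    (∀ (A : Matrix.SpecialLinearGroup (Fin 2) ℝ) (τ : UpperHalfPlane),
      ‖eFactor A τ‖ = 1) ∧
    (∀ (A B : Matrix.SpecialLinearGroup (Fin 2) ℝ) (τ : UpperHalfPlane),
      eFactor (A * B) τ = eFactor A (B • τ) * eFactor B τ) ∧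
    (∀ (A : Matrix.SpecialLinearGroup (Fin 2) ℝ) (τ : UpperHalfPlane) (t : ℂ),
      t ≠ Complex.I →
      (((A.1 1 0 * τ.re + A.1 1 1 +
          ‖(A.1 1 0 : ℂ) * (τ : ℂ) + (A.1 1 1 : ℂ)‖ : ℝ) : ℂ)
        - (A.1 1 0 * τ.im : ℝ) * t) ≠ 0 →
      (tAct A τ t + Complex.I) / (tAct A τ t - Complex.I)
        = eFactor A τ * ((t + Complex.I) / (t - Complex.I))) ∧
    (∀ (A B : Matrix.SpecialLinearGroup (Fin 2) ℝ) (τ : UpperHalfPlane) (z : ℂ),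
      ((A * B) • τ, eFactor (A * B) τ * z)
        = (A • (B • τ), eFactor A (B • τ) * (eFactor B τ * z))) := by
  refine ⟨norm_eFactor, eFactor_mul, fun A τ t _ h ↦ cayley_tAct A τ t h, fun A B τ z ↦ ?_⟩
  rw [mul_smul, eFactor_mul, mul_assoc]

end
end

section
/- Define the transformation on (ξ^0, ξ^a, 𝜉̃_a) for (a b; c d) ∈ SL(2,ℝ) by ξ^0 ↦ (aξ^0+b)/(cξ^0+d), ξ^a ↦ ξ^a/(cξ^0+d), 𝜉̃_a ↦ 𝜉̃_a + (c/(2(cξ^0+d)))κ_{aef}ξ^eξ^f, together with (𝜉̃_0, α̃) ↦ (d𝜉̃_0 - cα̃ + (κ_{efg}ξ^eξ^fξ^g/6)·c²/(cξ^0+d), -b𝜉̃_0 + aα̃ - (κ_{efg}ξ^eξ^fξ^g/6)·(c²(aξ^0+b)+2c)/(cξ^0+d)²). Then under this transformation the one-form d α̃ + ξ^0 d𝜉̃_0 + ξ^a d𝜉̃_a transforms by (d α̃ + ξ^i d𝜉̃_i) ↦ (d α̃ + ξ^i d𝜉̃_i)/(cξ^0+d), on the open set where cξ^0 + d ≠ 0.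 -/
/-!
Put `D = cξ⁰ + d` and `K = κ(ξ, ξ, ξ)`. Total symmetry of `κ` gives `dK = 3 κ(dξ, ξ, ξ)` and
`ξᵃ d(κ_abc ξᵇ ξᶜ) = 2 κ(dξ, ξ, ξ)`. After substituting the quotient-rule derivatives of the new
coordinates, the coefficients of `dα̃` and `dξ̃₀` acquire the factor `(ad - bc)/D = 1/D`, the terms in
`κ(dξ, ξ, ξ)` cancel outright, and the terms in `K dξ⁰` cancel because `ad - bc = 1`.
-/

open Finset

section TrilinearForm

variable {R : Type*} [CommRing R] {n : ℕ} (κ : Fin n → Fin n → Fin n → R)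

def trilinForm (x y z : Fin n → R) : R :=
  ∑ i, ∑ j, ∑ l, κ i j l * x i * y j * z l

theorem sum_mul_sum_sum_eq_trilinForm (x y z : Fin n → R) :
    ∑ e, x e * ∑ i, ∑ j, κ e i j * y i * z j = trilinForm κ x y z := by
  simp only [trilinForm, mul_sum]
  exact sum_congr rfl fun _ _ => sum_congr rfl fun _ _ => sum_congr rfl fun _ _ => by ring

variable {κ}

theorem trilinForm_comm_left (hκ : ∀ i j l, κ i j l = κ j i l) (x y z : Fin n → R) :
    trilinForm κ x y z = trilinForm κ y x z := by
  rw [trilinForm, sum_comm]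
  exact sum_congr rfl fun _ _ => sum_congr rfl fun _ _ => sum_congr rfl fun _ _ => by
    rw [hκ]; ring

theorem trilinForm_comm_right (hκ : ∀ i j l, κ i j l = κ i l j) (x y z : Fin n → R) :
    trilinForm κ x y z = trilinForm κ x z y := by
  refine sum_congr rfl fun _ _ => ?_
  rw [sum_comm]
  exact sum_congr rfl fun _ _ => sum_congr rfl fun _ _ => by rw [hκ]; ring

theorem sum_mul_add_sum_sum_eq_two_mul_trilinForm
    (hκ : ∀ i j l, κ i j l = κ j i l ∧ κ i j l = κ i l j) (x y : Fin n → R) :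
    ∑ e, x e * (∑ i, ∑ j, κ e i j * y i * x j + ∑ i, ∑ j, κ e i j * x i * y j)
      = 2 * trilinForm κ y x x := by
  simp only [mul_add, sum_add_distrib, sum_mul_sum_sum_eq_trilinForm]
  rw [trilinForm_comm_right (fun i j l => (hκ i j l).2) x x y,
    trilinForm_comm_left (fun i j l => (hκ i j l).1) x y x]
  ring

end TrilinearForm

section TrilinearFormDeriv

variable {𝕜 𝔸 : Type*} [NontriviallyNormedField 𝕜] [NormedCommRing 𝔸] [NormedAlgebra 𝕜 𝔸]
  {n : ℕ} (κ : Fin n → Fin n → Fin n → 𝔸) {x y z : 𝕜 → Fin n → 𝔸} {x' y' z' : Fin n → 𝔸} {s : 𝕜}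

theorem hasDerivAt_sum_sum_mul (e : Fin n) (hy : ∀ i, HasDerivAt (fun s => y s i) (y' i) s)
    (hz : ∀ i, HasDerivAt (fun s => z s i) (z' i) s) :
    HasDerivAt (fun s => ∑ i, ∑ j, κ e i j * y s i * z s j)
      (∑ i, ∑ j, κ e i j * y' i * z s j + ∑ i, ∑ j, κ e i j * y s i * z' j) s := by
  rw [← sum_add_distrib]
  refine HasDerivAt.fun_sum fun i _ => ?_
  rw [← sum_add_distrib]
  refine HasDerivAt.fun_sum fun j _ => ?_
  exact (((hy i).const_mul _).mul (hz j)).congr_deriv (by ring)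

theorem hasDerivAt_trilinForm (hx : ∀ i, HasDerivAt (fun s => x s i) (x' i) s)
    (hy : ∀ i, HasDerivAt (fun s => y s i) (y' i) s)
    (hz : ∀ i, HasDerivAt (fun s => z s i) (z' i) s) :
    HasDerivAt (fun s => trilinForm κ (x s) (y s) (z s))
      (trilinForm κ x' (y s) (z s) + trilinForm κ (x s) y' (z s)
        + trilinForm κ (x s) (y s) z') s := by
  simp only [← sum_mul_sum_sum_eq_trilinForm]
  refine (HasDerivAt.fun_sum (u := univ) fun e _ =>
    (hx e).fun_mul (hasDerivAt_sum_sum_mul κ e hy hz)).congr_deriv ?_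
  simp only [mul_add, sum_add_distrib, add_assoc]

variable {κ}

theorem hasDerivAt_trilinForm_diag (hκ : ∀ i j l, κ i j l = κ j i l ∧ κ i j l = κ i l j)
    (hx : ∀ i, HasDerivAt (fun s => x s i) (x' i) s) :
    HasDerivAt (fun s => trilinForm κ (x s) (x s) (x s))
      (3 * trilinForm κ x' (x s) (x s)) s := by
  refine (hasDerivAt_trilinForm κ hx hx hx).congr_deriv ?_
  rw [trilinForm_comm_right (fun i j l => (hκ i j l).2) (x s) (x s) x',
    trilinForm_comm_left (fun i j l => (hκ i j l).1) (x s) x']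
  ring

end TrilinearFormDeriv

section SDuality

variable {𝕜 𝕜' : Type*} [NontriviallyNormedField 𝕜] [NontriviallyNormedField 𝕜']
  [NormedAlgebra 𝕜 𝕜'] [CharZero 𝕜'] (a b c d : 𝕜') {x0 t0 α Q P t : 𝕜 → 𝕜'}
  {v p q Q' P' t' : 𝕜'} {s : 𝕜}

theorem hasDerivAt_sDual_xiTilde (hx0 : HasDerivAt x0 v s) (ht : HasDerivAt t t' s)
    (hP : HasDerivAt P P' s) (hD : c * x0 s + d ≠ 0) :
    HasDerivAt (fun s => t s + c / (2 * (c * x0 s + d)) * P s)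
      (t' - c ^ 2 * v / (2 * (c * x0 s + d) ^ 2) * P s + c / (2 * (c * x0 s + d)) * P') s := by
  have hD' : HasDerivAt (fun s => 2 * (c * x0 s + d)) (2 * (c * v)) s :=
    ((hx0.const_mul c).add_const d).const_mul 2
  refine (ht.add (((hasDerivAt_const s c).fun_div hD' (mul_ne_zero two_ne_zero hD)).fun_mul
    hP)).congr_deriv ?_
  field_simp
  ring

theorem hasDerivAt_sDual_xiTilde₀ (hx0 : HasDerivAt x0 v s) (ht0 : HasDerivAt t0 p s)
    (hα : HasDerivAt α q s) (hQ : HasDerivAt Q Q' s) (hD : c * x0 s + d ≠ 0) :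
    HasDerivAt (fun s => d * t0 s - c * α s + Q s / 6 * c ^ 2 / (c * x0 s + d))
      (d * p - c * q + c ^ 2 * (Q' * (c * x0 s + d) - c * v * Q s) / (6 * (c * x0 s + d) ^ 2))
      s := by
  refine (((ht0.const_mul d).sub (hα.const_mul c)).add
    (((hQ.div_const 6).mul_const _).fun_div ((hx0.const_mul c).add_const d) hD)).congr_deriv ?_
  field_simp

theorem hasDerivAt_sDual_alphaTilde (hx0 : HasDerivAt x0 v s) (ht0 : HasDerivAt t0 p s)
    (hα : HasDerivAt α q s) (hQ : HasDerivAt Q Q' s) (hD : c * x0 s + d ≠ 0) :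
    HasDerivAt (fun s => -b * t0 s + a * α s
        - Q s / 6 * (c ^ 2 * (a * x0 s + b) + 2 * c) / (c * x0 s + d) ^ 2)
      (-b * p + a * q - ((Q' * (c ^ 2 * (a * x0 s + b) + 2 * c) + c ^ 2 * a * v * Q s)
        * (c * x0 s + d) - 2 * c * v * (c ^ 2 * (a * x0 s + b) + 2 * c) * Q s)
          / (6 * (c * x0 s + d) ^ 3)) s := by
  have hM : HasDerivAt (fun s => c ^ 2 * (a * x0 s + b) + 2 * c) (c ^ 2 * (a * v)) s :=
    (((hx0.const_mul a).add_const b).const_mul _).add_const _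
  refine (((ht0.const_mul _).add (hα.const_mul a)).sub (((hQ.div_const 6).fun_mul hM).fun_div
    (((hx0.const_mul c).add_const d).fun_pow 2) (pow_ne_zero 2 hD))).congr_deriv ?_
  field_simp
  ring

end SDuality

section ContactFormAlgebra

variable {K : Type*} [Field K]

theorem sum_div_mul_sub_add_mul {ι : Type*} (u : Finset ι) (x t P P' : ι → K) (D α β : K) :
    ∑ e ∈ u, x e / D * (t e - α * P e + β * P' e)
      = (∑ e ∈ u, x e * t e - α * ∑ e ∈ u, x e * P e + β * ∑ e ∈ u, x e * P' e) / D := by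
  rw [mul_sum, mul_sum, ← sum_sub_distrib, ← sum_add_distrib, sum_div]
  exact sum_congr rfl fun e _ => by ring

variable [CharZero K] (a b c d : K)

theorem sDual_contactForm_eq (x0 v Q S T p q : K) (hdet : a * d - b * c = 1)
    (hD : c * x0 + d ≠ 0) :
    (-b * p + a * q - ((3 * S * (c ^ 2 * (a * x0 + b) + 2 * c) + c ^ 2 * a * v * Q) * (c * x0 + d)
        - 2 * c * v * (c ^ 2 * (a * x0 + b) + 2 * c) * Q) / (6 * (c * x0 + d) ^ 3))
      + (a * x0 + b) / (c * x0 + d)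
        * (d * p - c * q + c ^ 2 * (3 * S * (c * x0 + d) - c * v * Q) / (6 * (c * x0 + d) ^ 2))
      + (T - c ^ 2 * v / (2 * (c * x0 + d) ^ 2) * Q + c / (2 * (c * x0 + d)) * (2 * S))
        / (c * x0 + d)
    = (q + x0 * p + T) / (c * x0 + d) := by
  field_simp
  -- the two sides differ by `(ad - bc - 1) (D² (x0 p + q) - c² v Q / 6) / D³`, `D = c x0 + d`
  linear_combination 12 * ((c * x0 + d) ^ 2 * (x0 * p + q) - c ^ 2 * v * Q / 6) * hdet

end ContactFormAlgebra

-- One-forms are evaluated on the velocity at `s₀` of an arbitrary differentiable path.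
/-- the lifted S-duality transformation on the holomorphic
Darboux coordinates `(ξ⁰, ξᵃ, ξ̃₀, ξ̃ₐ, α̃)` rescales the contact form:
`dα̃ + ξⁱdξ̃ᵢ ↦ (dα̃ + ξⁱdξ̃ᵢ)/(cξ⁰+d)`, where one-forms are represented by
derivatives along an arbitrary differentiable path. -/
theorem stmt_19 {n : ℕ} (κ : Fin n → Fin n → Fin n → ℝ)
    (hκ : ∀ a b c, κ a b c = κ b a c ∧ κ a b c = κ a c b)
    (a b c d : ℝ) (hdet : a * d - b * c = 1)
    (ξ0 : ℝ → ℂ) (ξ : ℝ → Fin n → ℂ) (ξt0 : ℝ → ℂ) (ξt : ℝ → Fin n → ℂ)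
    (αt : ℝ → ℂ)
    (s₀ : ℝ) (hden : (c : ℂ) * ξ0 s₀ + d ≠ 0)
    (h1 : DifferentiableAt ℝ ξ0 s₀)
    (h2 : ∀ e, DifferentiableAt ℝ (fun s => ξ s e) s₀)
    (h3 : DifferentiableAt ℝ ξt0 s₀)
    (h4 : ∀ e, DifferentiableAt ℝ (fun s => ξt s e) s₀)
    (h5 : DifferentiableAt ℝ αt s₀) :
    let cub : ℝ → ℂ := fun s => ∑ i, ∑ j, ∑ l, (κ i j l : ℂ) * ξ s i * ξ s j * ξ s l
    let ξ0' : ℝ → ℂ := fun s => ((a : ℂ) * ξ0 s + b) / ((c : ℂ) * ξ0 s + d)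
    let ξ' : ℝ → Fin n → ℂ := fun s e => ξ s e / ((c : ℂ) * ξ0 s + d)
    let ξt' : ℝ → Fin n → ℂ := fun s e =>
      ξt s e + (c : ℂ) / (2 * ((c : ℂ) * ξ0 s + d))
        * ∑ i, ∑ j, (κ e i j : ℂ) * ξ s i * ξ s j
    let ξt0' : ℝ → ℂ := fun s =>
      (d : ℂ) * ξt0 s - (c : ℂ) * αt s
        + (cub s / 6) * (c : ℂ)^2 / ((c : ℂ) * ξ0 s + d)
    let αt' : ℝ → ℂ := fun s =>
      -(b : ℂ) * ξt0 s + (a : ℂ) * αt s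
        - (cub s / 6) * ((c : ℂ)^2 * ((a : ℂ) * ξ0 s + b) + 2 * c)
          / ((c : ℂ) * ξ0 s + d)^2
    deriv αt' s₀ + ξ0' s₀ * deriv ξt0' s₀
        + ∑ e, ξ' s₀ e * deriv (fun s => ξt' s e) s₀
      = (deriv αt s₀ + ξ0 s₀ * deriv ξt0 s₀
          + ∑ e, ξ s₀ e * deriv (fun s => ξt s e) s₀) / ((c : ℂ) * ξ0 s₀ + d) := by
  intro cub ξ0' ξ' ξt' ξt0' αt'
  have hκℂ : ∀ i j l, (κ i j l : ℂ) = κ j i l ∧ (κ i j l : ℂ) = κ i l j :=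
    fun i j l => ⟨congrArg _ (hκ i j l).1, congrArg _ (hκ i j l).2⟩
  have hξ : ∀ e, HasDerivAt (fun s => ξ s e) (deriv (fun s => ξ s e) s₀) s₀ :=
    fun e => (h2 e).hasDerivAt
  have hcub : HasDerivAt cub (3 * trilinForm (fun i j l => (κ i j l : ℂ))
      (fun e => deriv (fun s => ξ s e) s₀) (ξ s₀) (ξ s₀)) s₀ :=
    hasDerivAt_trilinForm_diag hκℂ hξ
  have hαt' : HasDerivAt αt' _ s₀ :=
    hasDerivAt_sDual_alphaTilde _ _ _ _ h1.hasDerivAt h3.hasDerivAt h5.hasDerivAt hcub hden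
  have hξt0' : HasDerivAt ξt0' _ s₀ :=
    hasDerivAt_sDual_xiTilde₀ _ _ h1.hasDerivAt h3.hasDerivAt h5.hasDerivAt hcub hden
  have hξt' : ∀ e, HasDerivAt (fun s => ξt' s e) _ s₀ := fun e =>
    hasDerivAt_sDual_xiTilde _ _ h1.hasDerivAt (h4 e).hasDerivAt
      (hasDerivAt_sum_sum_mul (fun i j l => (κ i j l : ℂ)) e hξ hξ) hden
  simp only [hαt'.deriv, hξt0'.deriv, (hξt' _).deriv, ξ']
  rw [sum_div_mul_sub_add_mul, sum_mul_add_sum_sum_eq_two_mul_trilinForm hκℂ,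
    sum_mul_sum_sum_eq_trilinForm]
  exact sDual_contactForm_eq _ _ _ _ _ _ _ _ _ _ _ (by exact_mod_cast hdet) hden
end
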